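/- In a category base (X, C), if B is an abundant Baire set, then there exists a region C such that C \ B is meager. -/

import Mathlib

open Set

/-- A category base: a family of subsets covering `X`, whose nonempty members
are called *regions*, satisfying Morgan's axioms. -/
structure CategoryBase (X : Type*) where
  base : Set (Set X)
  cover : ⋃₀ base = Set.univ
  ax2a : ∀ A ∈ base, A.Nonempty → ∀ D ⊆ base, D.Nonempty → (∀ d ∈ D, d.Nonempty) →
    D.Pairwise Disjoint → Cardinal.mk ↥D < Cardinal.mk ↥base →
    (∃ B ∈ base, B.Nonempty ∧ B ⊆ A ∩ ⋃₀ D) →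
      ∃ d ∈ D, ∃ B ∈ base, B.Nonempty ∧ B ⊆ A ∩ d
  ax2b : ∀ A ∈ base, A.Nonempty → ∀ D ⊆ base, D.Nonempty → (∀ d ∈ D, d.Nonempty) →
    D.Pairwise Disjoint → Cardinal.mk ↥D < Cardinal.mk ↥base →
    (¬ ∃ B ∈ base, B.Nonempty ∧ B ⊆ A ∩ ⋃₀ D) →
      ∃ B ∈ base, B.Nonempty ∧ B ⊆ A ∧ ∀ d ∈ D, Disjoint B d

namespace CategoryBase

variable {X : Type*} (cb : CategoryBase X)

/-- A region is a nonempty member of the base. -/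
def IsRegion (A : Set X) : Prop := A ∈ cb.base ∧ A.Nonempty

/-- `S` is singular if every region contains a subregion disjoint from `S`. -/
def Singular (S : Set X) : Prop :=
  ∀ A, cb.IsRegion A → ∃ B, cb.IsRegion B ∧ B ⊆ A ∧ Disjoint B S

/-- `S` is meager if it is a countable union of singular sets. -/
def Meager (S : Set X) : Prop :=
  ∃ f : ℕ → Set X, (∀ n, cb.Singular (f n)) ∧ S = ⋃ n, f n

/-- `S` is abundant if it is not meager. -/
def Abundant (S : Set X) : Prop := ¬ cb.Meager S

/-- `S` is abundant everywhere in the region `A` : `S` is abundant in every subregion of `A`. -/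
def AbundantEverywhereIn (S A : Set X) : Prop :=
  ∀ B, cb.IsRegion B → B ⊆ A → cb.Abundant (S ∩ B)

/-- `S` is a Baire set if every region has a subregion in which `S` or its complement is meager. -/
def BaireSet (S : Set X) : Prop :=
  ∀ A, cb.IsRegion A → ∃ B, cb.IsRegion B ∧ B ⊆ A ∧
    (cb.Meager (S ∩ B) ∨ cb.Meager (Sᶜ ∩ B))

/-- `S` is locally abundant at `x`. -/
def LocallyAbundantAt (S : Set X) (x : X) : Prop :=
  ∃ A, cb.IsRegion A ∧ x ∈ A ∧ ∀ B, cb.IsRegion B → B ⊆ A → x ∈ B → cb.Abundant (S ∩ B)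

/-- The set of cluster points of `S`. -/
def cluster (S : Set X) : Set X := {x | cb.LocallyAbundantAt S x}

end CategoryBase

/-- `S` is open in the `D`-topology iff `D (X \ S) ⊆ X \ S`. -/
def DOpen {X : Type*} (D : Set X → Set X) (S : Set X) : Prop := D Sᶜ ⊆ Sᶜ

/-- `S` is nowhere dense in the `D`-topology: every nonempty `D`-open set contains a
nonempty `D`-open subset disjoint from `S`. -/
def TauNowhereDense {X : Type*} (D : Set X → Set X) (S : Set X) : Prop :=
  ∀ U, DOpen D U → U.Nonempty → ∃ V, DOpen D V ∧ V.Nonempty ∧ V ⊆ U ∧ Disjoint V S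

/-- `S` is of the first category in the `D`-topology: a countable union of nowhere dense sets. -/
def TauFirstCategory {X : Type*} (D : Set X → Set X) (S : Set X) : Prop :=
  ∃ f : ℕ → Set X, (∀ n, TauNowhereDense D (f n)) ∧ S = ⋃ n, f n

/-- `S` has the Baire property in the `D`-topology: it differs from a `D`-open set by a
first category set. -/
def TauBaireProperty {X : Type*} (D : Set X → Set X) (S : Set X) : Prop :=
  ∃ U, DOpen D U ∧ TauFirstCategory D ((S \ U) ∪ (U \ S))

/-!
If no region `C` has `C \ B` meager, the Baire property of `B` leaves, in every region, a
subregion in which `B` itself is meager; by Morgan's fundamental lemma `B` is then meager.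

For the fundamental lemma, run through the base along a well-ordering of minimal order type and
greedily pick pairwise disjoint regions in which `S` is meager. Every initial segment of this
family is smaller than the base, so axiom 2 applies to it and shows that the family is dense:
every region has a subregion inside one of its members. Then the complement of its union is
singular, and gluing the `n`-th singular pieces of `S` across the disjoint members gives, for
each `n`, a singular set; `S` is covered by these countably many singular sets.
-/

open Function

universe u

namespace CategoryBase

variable {X : Type u} (cb : CategoryBase X)

def IsDenseFamily (𝔇 : Set (Set X)) : Prop :=
  ∀ A, cb.IsRegion A → ∃ d ∈ 𝔇, ∃ C, cb.IsRegion C ∧ C ⊆ A ∩ d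

variable {cb}

theorem Singular.mono {S T : Set X} (hT : cb.Singular T) (hST : S ⊆ T) : cb.Singular S :=
  fun A hA ↦
    let ⟨C, hC, hCA, hCT⟩ := hT A hA
    ⟨C, hC, hCA, hCT.mono_right hST⟩

theorem Singular.union {S T : Set X} (hS : cb.Singular S) (hT : cb.Singular T) :
    cb.Singular (S ∪ T) := by
  intro A hA
  obtain ⟨C, hC, hCA, hCS⟩ := hS A hA
  obtain ⟨C', hC', hC'C, hC'T⟩ := hT C hC
  exact ⟨C', hC', hC'C.trans hCA, disjoint_union_right.2 ⟨hCS.mono_left hC'C, hC'T⟩⟩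

theorem meager_of_subset_iUnion {S : Set X} (f : ℕ → Set X) (hf : ∀ n, cb.Singular (f n))
    (hS : S ⊆ ⋃ n, f n) : cb.Meager S :=
  ⟨fun n ↦ f n ∩ S, fun n ↦ (hf n).mono inter_subset_left, by
    rw [← iUnion_inter, inter_eq_right.2 hS]⟩

theorem singular_compl_sUnion {𝔇 : Set (Set X)} (h𝔇 : cb.IsDenseFamily 𝔇) :
    cb.Singular (⋃₀ 𝔇)ᶜ := by
  intro A hA
  obtain ⟨d, hd, C, hC, hCAd⟩ := h𝔇 A hA
  refine ⟨C, hC, hCAd.trans inter_subset_left, disjoint_compl_right_iff_subset.2 ?_⟩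
  exact (hCAd.trans inter_subset_right).trans (subset_sUnion_of_mem hd)

theorem singular_iUnion_inter {𝔇 : Set (Set X)} (hdisj : 𝔇.Pairwise Disjoint)
    (h𝔇 : cb.IsDenseFamily 𝔇) (f : ∀ d ∈ 𝔇, Set X) (hf : ∀ d hd, cb.Singular (f d hd)) :
    cb.Singular (⋃ (d) (hd : d ∈ 𝔇), f d hd ∩ d) := by
  intro A hA
  obtain ⟨d, hd, C, hC, hCAd⟩ := h𝔇 A hA
  obtain ⟨C', hC', hC'C, hC'f⟩ := hf d hd C hC
  refine ⟨C', hC', hC'C.trans (hCAd.trans inter_subset_left), ?_⟩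
  simp only [disjoint_iUnion_right]
  intro d' hd'
  have hC'd : C' ⊆ d := hC'C.trans (hCAd.trans inter_subset_right)
  rcases eq_or_ne d' d with rfl | hne
  · exact hC'f.mono_right inter_subset_left
  · exact ((hdisj hd' hd hne).symm.mono_left hC'd).mono_right inter_subset_right

theorem meager_of_forall_meager_inter {𝔇 : Set (Set X)} (hdisj : 𝔇.Pairwise Disjoint)
    (h𝔇 : cb.IsDenseFamily 𝔇) {S : Set X} (hS : ∀ d ∈ 𝔇, cb.Meager (S ∩ d)) :
    cb.Meager S := by
  choose f hf hSf using hS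
  refine meager_of_subset_iUnion (fun n ↦ (⋃₀ 𝔇)ᶜ ∪ ⋃ (d) (hd : d ∈ 𝔇), f d hd n ∩ d)
    (fun n ↦ (singular_compl_sUnion h𝔇).union
      (singular_iUnion_inter hdisj h𝔇 (fun d hd ↦ f d hd n) fun d hd ↦ hf d hd n)) ?_
  intro x hxS
  by_cases hx : ∃ d ∈ 𝔇, x ∈ d
  · obtain ⟨d, hd, hxd⟩ := hx
    obtain ⟨n, hn⟩ := mem_iUnion.1 (hSf d hd ▸ mem_inter hxS hxd : x ∈ ⋃ n, f d hd n)
    exact mem_iUnion.2 ⟨n, Or.inr (mem_iUnion₂.2 ⟨d, hd, hn, hxd⟩)⟩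
  · exact mem_iUnion.2 ⟨0, Or.inl fun hx' ↦ hx (mem_sUnion.1 hx')⟩

theorem exists_subregion_inter_or_disjoint {A : Set X} (hA : cb.IsRegion A) {𝔇 : Set (Set X)}
    (h𝔇 : ∀ d ∈ 𝔇, cb.IsRegion d) (hdisj : 𝔇.Pairwise Disjoint)
    (hcard : Cardinal.mk 𝔇 < Cardinal.mk cb.base) :
    (∃ d ∈ 𝔇, ∃ C, cb.IsRegion C ∧ C ⊆ A ∩ d) ∨
      ∃ C, cb.IsRegion C ∧ C ⊆ A ∧ ∀ d ∈ 𝔇, Disjoint C d := by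
  rcases 𝔇.eq_empty_or_nonempty with rfl | hne
  · exact Or.inr ⟨A, hA, subset_rfl, by simp⟩
  have hbase : 𝔇 ⊆ cb.base := fun d hd ↦ (h𝔇 d hd).1
  have hnonempty : ∀ d ∈ 𝔇, d.Nonempty := fun d hd ↦ (h𝔇 d hd).2
  by_cases h : ∃ C ∈ cb.base, C.Nonempty ∧ C ⊆ A ∩ ⋃₀ 𝔇
  · obtain ⟨d, hd, C, hCb, hCne, hC⟩ :=
      cb.ax2a A hA.1 hA.2 𝔇 hbase hne hnonempty hdisj hcard h
    exact Or.inl ⟨d, hd, C, ⟨hCb, hCne⟩, hC⟩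
  · obtain ⟨C, hCb, hCne, hCA, hC⟩ :=
      cb.ax2b A hA.1 hA.2 𝔇 hbase hne hnonempty hdisj hcard h
    exact Or.inr ⟨C, ⟨hCb, hCne⟩, hCA, hC⟩

section Exhaustion

variable (cb) {ι : Type u} [LinearOrder ι] [WellFoundedLT ι] (e : ι → Set X) (sub : Set X → Set X)

open Classical in
noncomputable def exhaustion : ι → Set X :=
  wellFounded_lt.fix fun α D ↦
    if h : ∃ C, cb.IsRegion C ∧ C ⊆ e α ∧ ∀ β (hβ : β < α), Disjoint C (D β hβ)
    then sub h.choose else ∅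

variable {cb e sub}

open Classical in
theorem exhaustion_eq (α : ι) : cb.exhaustion e sub α =
    if h : ∃ C, cb.IsRegion C ∧ C ⊆ e α ∧ ∀ β < α, Disjoint C (cb.exhaustion e sub β)
    then sub h.choose else ∅ := by
  rw [exhaustion, wellFounded_lt.fix_eq]

theorem exists_of_exhaustion_nonempty {α : ι} (h : (cb.exhaustion e sub α).Nonempty) :
    ∃ C, cb.IsRegion C ∧ C ⊆ e α ∧ (∀ β < α, Disjoint C (cb.exhaustion e sub β)) ∧
      cb.exhaustion e sub α = sub C := by
  classical
  rw [exhaustion_eq] at h ⊢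
  split_ifs at h ⊢ with hC
  · exact ⟨hC.choose, hC.choose_spec.1, hC.choose_spec.2.1, hC.choose_spec.2.2, rfl⟩
  · exact absurd h not_nonempty_empty

theorem exhaustion_nonempty_of_exists (hreg : ∀ A, cb.IsRegion A → cb.IsRegion (sub A)) {α : ι}
    (h : ∃ C, cb.IsRegion C ∧ C ⊆ e α ∧ ∀ β < α, Disjoint C (cb.exhaustion e sub β)) :
    (cb.exhaustion e sub α).Nonempty := by
  classical
  rw [exhaustion_eq, dif_pos h]
  exact (hreg _ h.choose_spec.1).2

theorem pairwise_disjoint_exhaustion (hsub : ∀ A, sub A ⊆ A) :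
    Pairwise (Disjoint on cb.exhaustion e sub) := by
  refine (pairwise_disjoint_on _).2 fun β α hβα ↦ ?_
  rcases (cb.exhaustion e sub α).eq_empty_or_nonempty with h | h
  · simp [h]
  · obtain ⟨C, -, -, hC, hα⟩ := exists_of_exhaustion_nonempty h
    exact ((hC β hβα).mono_left (hα ▸ hsub C)).symm

theorem exists_subregion_inter_exhaustion (hsub : ∀ A, sub A ⊆ A)
    (hreg : ∀ A, cb.IsRegion A → cb.IsRegion (sub A)) {α : ι}
    (hα : cb.IsRegion (e α)) (hcard : Cardinal.mk (Iio α) < Cardinal.mk cb.base) :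
    ∃ β, ∃ C, cb.IsRegion C ∧ C ⊆ e α ∩ cb.exhaustion e sub β := by
  set D := cb.exhaustion e sub
  have hregion {β} (h : (D β).Nonempty) : cb.IsRegion (D β) ∧ D β ⊆ e β := by
    obtain ⟨C, hC, hCe, -, hβ⟩ := exists_of_exhaustion_nonempty h
    rw [show D β = sub C from hβ]
    exact ⟨hreg C hC, (hsub C).trans hCe⟩
  rcases (D α).eq_empty_or_nonempty with hα0 | hαne
  swap
  · exact ⟨α, D α, (hregion hαne).1, subset_inter (hregion hαne).2 subset_rfl⟩
  -- The earlier nonempty stages form a disjoint family of fewer regions than the base has.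
  set 𝔇 := D '' {β | β < α ∧ (D β).Nonempty}
  have h𝔇 : ∀ d ∈ 𝔇, cb.IsRegion d := by
    rintro - ⟨β, ⟨-, hβ⟩, rfl⟩
    exact (hregion hβ).1
  have hdisj : 𝔇.Pairwise Disjoint :=
    ((pairwise_disjoint_exhaustion hsub).set_pairwise _).image
  have hcard𝔇 : Cardinal.mk 𝔇 < Cardinal.mk cb.base :=
    (Cardinal.mk_image_le.trans (Cardinal.mk_le_mk_of_subset fun _ hβ ↦ hβ.1)).trans_lt hcard
  rcases exists_subregion_inter_or_disjoint hα h𝔇 hdisj hcard𝔇 with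
    ⟨-, ⟨β, -, rfl⟩, C, hC, hCsub⟩ | ⟨C, hC, hCe, hCdisj⟩
  · exact ⟨β, C, hC, hCsub⟩
  · refine absurd (exhaustion_nonempty_of_exists hreg ⟨C, hC, hCe, fun β hβ ↦ ?_⟩)
      (not_nonempty_iff_eq_empty.2 hα0)
    rcases (D β).eq_empty_or_nonempty with h | h
    · exact (disjoint_empty C).mono_right h.le
    · exact hCdisj _ ⟨β, ⟨hβ, h⟩, rfl⟩

end Exhaustion

theorem exists_pairwise_disjoint_isDenseFamily {P : Set X → Prop}
    (hP : ∀ A, cb.IsRegion A → ∃ C, cb.IsRegion C ∧ C ⊆ A ∧ P C) :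
    ∃ 𝔇 : Set (Set X), 𝔇.Pairwise Disjoint ∧ cb.IsDenseFamily 𝔇 ∧ ∀ d ∈ 𝔇, P d := by
  have hsubregion : ∀ A, ∃ C, C ⊆ A ∧ (cb.IsRegion A → cb.IsRegion C ∧ P C) := fun A ↦ by
    by_cases hA : cb.IsRegion A
    · obtain ⟨C, hC, hCA, hPC⟩ := hP A hA
      exact ⟨C, hCA, fun _ ↦ ⟨hC, hPC⟩⟩
    · exact ⟨A, subset_rfl, fun h ↦ absurd h hA⟩
  choose sub hsub hsubP using hsubregion
  -- Enumerating the base along its initial ordinal makes every initial segment smaller than it.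
  obtain ⟨e⟩ : Nonempty ((Cardinal.mk cb.base).ord.ToType ≃ cb.base) :=
    Cardinal.eq.1 (Cardinal.mk_ord_toType _)
  set D := cb.exhaustion (fun α ↦ (e α : Set X)) sub
  refine ⟨D '' {α | (D α).Nonempty},
    ((pairwise_disjoint_exhaustion hsub).set_pairwise _).image, fun A hA ↦ ?_, ?_⟩
  · set α := e.symm ⟨A, hA.1⟩
    have hαA : (e α : Set X) = A := by simp [α]
    have hcard : Cardinal.mk (Iio α) < Cardinal.mk cb.base := by
      simpa using Cardinal.mk_Iio_lt α (by simp)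
    obtain ⟨β, C, hC, hCsub⟩ := exists_subregion_inter_exhaustion (e := fun α ↦ (e α : Set X))
      hsub (fun A hA ↦ (hsubP A hA).1) (hαA ▸ hA) hcard
    rw [hαA] at hCsub
    exact ⟨D β, ⟨β, hC.2.mono (hCsub.trans inter_subset_right), rfl⟩, C, hC, hCsub⟩
  · rintro - ⟨α, hα, rfl⟩
    obtain ⟨C, hC, -, -, hαC⟩ := exists_of_exhaustion_nonempty hα
    rw [show D α = sub C from hαC]
    exact (hsubP C hC).2

theorem meager_of_forall_exists_subregion {S : Set X}
    (h : ∀ A, cb.IsRegion A → ∃ C, cb.IsRegion C ∧ C ⊆ A ∧ cb.Meager (S ∩ C)) :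
    cb.Meager S :=
  let ⟨_, hdisj, hdense, hS⟩ := exists_pairwise_disjoint_isDenseFamily h
  meager_of_forall_meager_inter hdisj hdense hS

end CategoryBase

/-- If `B` is an abundant Baire set, then there exists a region `C`
such that `C \ B` is meager. -/
theorem stmt_7 {X : Type*} (cb : CategoryBase X) (B : Set X)
    (hab : cb.Abundant B) (hB : cb.BaireSet B) :
    ∃ C, cb.IsRegion C ∧ cb.Meager (C \ B) := by
  by_contra! hcon
  refine hab (CategoryBase.meager_of_forall_exists_subregion fun A hA ↦ ?_)
  obtain ⟨C, hC, hCA, hmeager | hmeager⟩ := hB A hA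
  · exact ⟨C, hC, hCA, hmeager⟩
  · exact absurd (by rwa [sdiff_eq_compl_inter]) (hcon C hC)
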